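/- Let A=(C,m) be a 3-dimensional toric idealistic cluster and suppose the node Q_i has a child Q_j along the edge labelled a with m_j = m_i. Let S_i be the set of labels under Q_i. Then: (i) if a ∈ S_i then χ_i = 0; (ii) if Q_i is the root (S_i = ∅) then χ_i = 2 − m_i; (iii) if a ∉ S_i and #S_i = 1 then χ_i = 1 − m_i; (iv) if a ∉ S_i and #S_i = 2 then χ_i = −m_i. -/

import Mathlib

open Finset

/-!
Common framework: 3-dimensional toric constellations and toric idealistic clusters.
The edge labels `1, 2, 3` of the paper are encoded as `0, 1, 2 : Fin 3`.
-/

/-- A 3-dimensional toric constellation: a finite rooted tree on nodes `0, …, r−1`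
(node `0` the root, every child having larger index than its parent), each node having
at most three children, the edges from a node to its children carrying pairwise
distinct labels in `Fin 3`.  `label j` is the label of the edge from `parent j` to `j`
(irrelevant for the root). -/
structure ToricConstellation (r : ℕ) where
  parent : Fin r → Fin r
  label : Fin r → Fin 3
  parent_lt : ∀ i : Fin r, 0 < (i : ℕ) → (parent i : ℕ) < (i : ℕ)
  parent_root : ∀ i : Fin r, (i : ℕ) = 0 → parent i = i
  label_distinct : ∀ i j : Fin r, 0 < (i : ℕ) → 0 < (j : ℕ) → i ≠ j →
    parent i = parent j → label i ≠ label j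

namespace ToricConstellation

variable {r : ℕ}

/-- The ordered triple of vectors of `ℤ³` attached to a node: the root carries the
standard basis, and the child along the edge labelled `a` of a node with cone
`(u₁,u₂,u₃)` carries the triple obtained by replacing `u_a` with `u₁+u₂+u₃`. -/
def cone (C : ToricConstellation r) (i : Fin r) : Fin 3 → (Fin 3 → ℤ) :=
  if h : 0 < (i : ℕ) then
    Function.update (cone C (C.parent i)) (C.label i) (∑ a, cone C (C.parent i) a)
  else fun a => Pi.single a 1
termination_by (i : ℕ)
decreasing_by all_goals exact C.parent_lt i h

/-- `v(Q) = u₁ + u₂ + u₃`, the sum of the cone vectors of a node. -/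
def v (C : ToricConstellation r) (i : Fin r) : Fin 3 → ℤ := ∑ a, cone C i a

/-- `Prox C j i` means `j → i`, i.e. `Q_j` is proximate to `Q_i`:
`j ≠ i` and `v(Q_i)` is an entry of `cone(Q_j)`. -/
def Prox (C : ToricConstellation r) (j i : Fin r) : Prop :=
  j ≠ i ∧ ∃ a : Fin 3, cone C j a = v C i

instance (C : ToricConstellation r) (j i : Fin r) : Decidable (C.Prox j i) := by
  unfold Prox; infer_instance

/-- `inChain C i a b j = true` iff `j = Q_i(a, b^t)` for some `t ≥ 0`, i.e. `j` is
reached from `i` by one edge labelled `a` followed by `t` edges labelled `b`. -/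
def inChain (C : ToricConstellation r) (i : Fin r) (a b : Fin 3) (j : Fin r) : Bool :=
  if h : 0 < (j : ℕ) then
    (decide (C.parent j = i) && decide (C.label j = a)) ||
      (decide (C.label j = b) && inChain C i a b (C.parent j))
  else false
termination_by (j : ℕ)
decreasing_by exact C.parent_lt j h

/-- `LinProx C j i` means `j ↠ i`, i.e. `Q_j` is linearly proximate to `Q_i`. -/
def LinProx (C : ToricConstellation r) (j i : Fin r) : Prop :=
  ∃ a b : Fin 3, a ≠ b ∧ inChain C i a b j = true

instance (C : ToricConstellation r) (j i : Fin r) : Decidable (C.LinProx j i) := by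
  unfold LinProx; infer_instance

/-- `j` is a child of `i`. -/
def IsChild (C : ToricConstellation r) (j i : Fin r) : Prop :=
  0 < (j : ℕ) ∧ C.parent j = i

instance (C : ToricConstellation r) (j i : Fin r) : Decidable (C.IsChild j i) := by
  unfold IsChild; infer_instance

/-- The set `S_i` of labels of the edges on the path from the root to `Q_i`. -/
def labelsUnder (C : ToricConstellation r) (i : Fin r) : Finset (Fin 3) :=
  if h : 0 < (i : ℕ) then insert (C.label i) (labelsUnder C (C.parent i)) else ∅
termination_by (i : ℕ)
decreasing_by exact C.parent_lt i h

/-- `i` is a weak ancestor of `j` (`i = j` or `i` a strict ancestor of `j`). -/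
def anc (C : ToricConstellation r) (i j : Fin r) : Bool :=
  decide (i = j) || (if h : 0 < (j : ℕ) then anc C i (C.parent j) else false)
termination_by (j : ℕ)
decreasing_by exact C.parent_lt j h

/-- The set of nodes weakly above `i` (`i` together with its descendants). -/
def weakAbove (C : ToricConstellation r) (i : Fin r) : Finset (Fin r) :=
  univ.filter (fun j => anc C i j = true)

end ToricConstellation

/-- A 3-dimensional toric cluster: a toric constellation together with a positive
integer weight for each node. -/
structure ToricCluster (r : ℕ) extends ToricConstellation r where
  m : Fin r → ℤ
  m_pos : ∀ j, 0 < m j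

namespace ToricCluster

open ToricConstellation

variable {r : ℕ}

/-- `M_{Q_i}(a,b) := Σ_{t ≥ 0, Q_i(a,b^t) ∈ C} m_{Q_i(a,b^t)}`. -/
def M (A : ToricCluster r) (i : Fin r) (a b : Fin 3) : ℤ :=
  ∑ j ∈ univ.filter (fun j => inChain A.toToricConstellation i a b j = true), A.m j

/-- The cluster is idealistic: the linear proximity inequalities
`M_{Q_i}(a,b) + M_{Q_i}(b,a) ≤ m_{Q_i}` hold. -/
def Idealistic (A : ToricCluster r) : Prop :=
  ∀ i : Fin r, ∀ a b : Fin 3, a ≠ b → A.M i a b + A.M i b a ≤ A.m i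

/-- The set of nodes `j` proximate to `i` (`j → i`). -/
def proxSet (A : ToricCluster r) (i : Fin r) : Finset (Fin r) :=
  univ.filter (fun j => Prox A.toToricConstellation j i)

/-- `B_i`: the set of nodes to which `i` is proximate. -/
def Bset (A : ToricCluster r) (i : Fin r) : Finset (Fin r) :=
  univ.filter (fun j => Prox A.toToricConstellation i j)

/-- `A_i`: the children `k` of `i` for which there is no `l` with `i → l` and `k → l`. -/
def Aset (A : ToricCluster r) (i : Fin r) : Finset (Fin r) :=
  univ.filter (fun k => IsChild A.toToricConstellation k i ∧
    ¬ ∃ l, Prox A.toToricConstellation i l ∧ Prox A.toToricConstellation k l)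

/-- The Euler characteristic `χ_i = χ(E_i°)`. -/
def chi (A : ToricCluster r) (i : Fin r) : ℤ :=
  3 + A.m i * (A.m i - 3)
    - ∑ j ∈ A.proxSet i, A.m j * (A.m j - 1)
    + ∑ j ∈ A.proxSet i,
        (A.m j - ∑ k ∈ (A.proxSet i).filter
          (fun k => LinProx A.toToricConstellation k j), A.m k)
    + ∑ j ∈ A.Bset i,
        (A.m i - ∑ k ∈ (A.proxSet j).filter
          (fun k => LinProx A.toToricConstellation k i), A.m k)
    - ((A.Aset i).card : ℤ) - 2 * ((A.Bset i).card : ℤ)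
    + (((A.Bset i).card.choose 2 : ℕ) : ℤ)

/-- `D_i = m_i² − Σ_{j→i} m_j²`. -/
def D (A : ToricCluster r) (i : Fin r) : ℤ :=
  A.m i ^ 2 - ∑ j ∈ A.proxSet i, A.m j ^ 2

/-- `r_{ab} = m_i − M_{Q_i}(a,b) − M_{Q_i}(b,a)`. -/
def rab (A : ToricCluster r) (i : Fin r) (a b : Fin 3) : ℤ :=
  A.m i - A.M i a b - A.M i b a

/-- `R_i = r̂_{12} + r̂_{13} + r̂_{23}`, where `r̂_{ab} = r_{ab}` if the remaining third
label does not appear under `Q_i`, and `r̂_{ab} = 0` otherwise.  (Labels `1,2,3` are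
encoded as `0,1,2 : Fin 3`.) -/
def R (A : ToricCluster r) (i : Fin r) : ℤ :=
  (if (2 : Fin 3) ∉ labelsUnder A.toToricConstellation i then A.rab i 0 1 else 0)
  + (if (1 : Fin 3) ∉ labelsUnder A.toToricConstellation i then A.rab i 0 2 else 0)
  + (if (0 : Fin 3) ∉ labelsUnder A.toToricConstellation i then A.rab i 1 2 else 0)

/-- `T_i = 3 − #A_i − 2·#B_i + (#B_i choose 2)`. -/
def T (A : ToricCluster r) (i : Fin r) : ℤ :=
  3 - ((A.Aset i).card : ℤ) - 2 * ((A.Bset i).card : ℤ)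
    + (((A.Bset i).card.choose 2 : ℕ) : ℤ)

/-- The nodes to which `i` is proximate, of smaller index: the sums in the recursive
definitions of the numerical data range over the nodes to which `i` is proximate,
which are ancestors of `i` and hence have smaller index (making the recursion
well-founded). -/
def anteSet (A : ToricCluster r) (i : Fin r) : Finset (Fin r) :=
  univ.filter (fun j => (j : ℕ) < (i : ℕ) ∧ Prox A.toToricConstellation i j)

/-- The numerical datum `N_i := m_i + Σ_{j : i→j} N_j`. -/
def N (A : ToricCluster r) (i : Fin r) : ℤ :=
  A.m i + ∑ j ∈ (A.anteSet i).attach, N A j.1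
termination_by (i : ℕ)
decreasing_by
  have hj := j.2
  simp only [anteSet, Finset.mem_filter] at hj
  exact hj.2.1

/-- The numerical datum `ν_i := 3 + Σ_{j : i→j} (ν_j − 1)`. -/
def nu (A : ToricCluster r) (i : Fin r) : ℤ :=
  3 + ∑ j ∈ (A.anteSet i).attach, (nu A j.1 - 1)
termination_by (i : ℕ)
decreasing_by
  have hj := j.2
  simp only [anteSet, Finset.mem_filter] at hj
  exact hj.2.1

end ToricCluster


open ToricConstellation ToricCluster

/-!
Since `m_j = m_i`, the chain of `Q_j` alone exhausts the linear proximity inequalities at `Q_i`: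
`Q_j` is the only child of `Q_i` and every child of `Q_j` is again reached along `a`. Hence `Q_j`
is the only node proximate to `Q_i`, and it is linearly proximate to `Q_i`.

The entries of `cone(Q_k)` are the standard vectors `e_c`, `c ∉ S_k`, and the vectors `v(Q_l)`
for the nodes `Q_l` recorded along the path to `Q_k`, one for each `c ∈ S_k`. Since `v` is
injective (`v(Q_p)` has positive coordinates in the basis `cone(Q_q)` exactly when `Q_q` is an
ancestor of `Q_p`), `#B_i = #S_i`, and `Q_j` is proximate to the node behind entry `c` of
`cone(Q_i)` iff `c ≠ a`. Substituting into `χ_i` leaves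
`χ_i = 3 − m_i + [a ∈ S_i]·m_i − [S_i ⊆ {a}] − 2·#S_i + (#S_i choose 2)`.
-/

namespace ToricConstellation

variable {r : ℕ} (C : ToricConstellation r)

open Relation

@[elab_as_elim]
theorem induction_parent {motive : Fin r → Prop}
    (root : ∀ k : Fin r, (k : ℕ) = 0 → motive k)
    (child : ∀ k : Fin r, 0 < (k : ℕ) → motive (C.parent k) → motive k) (k : Fin r) :
    motive k := by
  induction k using WellFoundedLT.induction with
  | _ k ih =>
    rcases Nat.eq_zero_or_pos k with hk | hk
    · exact root k hk
    · exact child k hk (ih _ (C.parent_lt k hk))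

theorem cone_of_eq_zero {k : Fin r} (hk : (k : ℕ) = 0) : C.cone k = fun c => Pi.single c 1 := by
  rw [cone]; simp [hk]

theorem cone_of_pos {k : Fin r} (hk : 0 < (k : ℕ)) :
    C.cone k = Function.update (C.cone (C.parent k)) (C.label k) (C.v (C.parent k)) := by
  rw [cone]; simp [hk, v]

theorem labelsUnder_of_eq_zero {k : Fin r} (hk : (k : ℕ) = 0) : C.labelsUnder k = ∅ := by
  rw [labelsUnder]; simp [hk]

theorem labelsUnder_of_pos {k : Fin r} (hk : 0 < (k : ℕ)) :
    C.labelsUnder k = insert (C.label k) (C.labelsUnder (C.parent k)) := by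
  rw [labelsUnder]; simp [hk]

theorem inChain_iff {i k : Fin r} {a b : Fin 3} :
    C.inChain i a b k = true ↔ 0 < (k : ℕ) ∧ (C.parent k = i ∧ C.label k = a ∨
      C.label k = b ∧ C.inChain i a b (C.parent k) = true) := by
  rw [inChain]; split <;> simp_all

theorem parent_isChild {k : Fin r} (hk : 0 < (k : ℕ)) : C.IsChild k (C.parent k) := ⟨hk, rfl⟩

theorem eq_of_isChild_of_label_eq {k k' i : Fin r} (hk : C.IsChild k i) (hk' : C.IsChild k' i)
    (hl : C.label k = C.label k') : k = k' := by
  by_contra hne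
  exact C.label_distinct k k' hk.1 hk'.1 hne (hk.2.trans hk'.2.symm) hl

/-- `coord q a x` is the `a`-th coordinate of `x` in the basis `cone q`: replacing `u_l` by
`u₁ + u₂ + u₃` replaces each dual vector `ψ_a` with `a ≠ l` by `ψ_a − ψ_l`. -/
def coord (q : Fin r) (a : Fin 3) : (Fin 3 → ℤ) →ₗ[ℤ] ℤ :=
  if _ : 0 < (q : ℕ) then
    if a = C.label q then coord (C.parent q) a
    else coord (C.parent q) a - coord (C.parent q) (C.label q)
  else LinearMap.proj a
termination_by (q : ℕ)
decreasing_by all_goals exact C.parent_lt q ‹_›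

theorem coord_of_eq_zero {q : Fin r} (hq : (q : ℕ) = 0) (a : Fin 3) :
    C.coord q a = LinearMap.proj a := by
  rw [coord]; simp [hq]

theorem coord_label {q : Fin r} (hq : 0 < (q : ℕ)) :
    C.coord q (C.label q) = C.coord (C.parent q) (C.label q) := by
  rw [coord]; simp [hq]

theorem coord_of_ne_label {q : Fin r} (hq : 0 < (q : ℕ)) {a : Fin 3} (ha : a ≠ C.label q) :
    C.coord q a = C.coord (C.parent q) a - C.coord (C.parent q) (C.label q) := by
  rw [coord]; simp [hq, ha]

theorem coord_cone (q : Fin r) (a b : Fin 3) :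
    C.coord q a (C.cone q b) = if a = b then 1 else 0 := by
  induction q using C.induction_parent generalizing a b with
  | root q hq => simp [coord_of_eq_zero C hq, cone_of_eq_zero C hq, Pi.single_apply]
  | child q hq ih =>
    have hv : ∀ a, C.coord (C.parent q) a (C.v (C.parent q)) = 1 := by
      intro a; simp [v, map_sum, ih]
    rw [cone_of_pos C hq]
    rcases eq_or_ne a (C.label q) with rfl | ha
    · rw [coord_label C hq]
      rcases eq_or_ne b (C.label q) with rfl | hb
      · simp [hv]
      · simp [hb, ih, Ne.symm hb]
    · rw [coord_of_ne_label C hq ha]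
      rcases eq_or_ne b (C.label q) with rfl | hb
      · simp [hv, ha]
      · simp [hb, ih, Ne.symm hb]

theorem coord_v (q : Fin r) (a : Fin 3) : C.coord q a (C.v q) = 1 := by
  simp [v, map_sum, coord_cone]

theorem cone_injective (q : Fin r) : Function.Injective (C.cone q) := by
  intro b b' h
  have := C.coord_cone q b b'
  rw [← h, coord_cone] at this
  simpa [eq_comm] using this

theorem coord_nonneg_of_reflTransGen {p q : Fin r} (h : ReflTransGen C.IsChild p q) :
    (∀ a c, 0 ≤ C.coord q a (C.cone p c)) ∧ ∀ a, 1 ≤ C.coord q a (C.v p) := by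
  induction h using ReflTransGen.head_induction_on with
  | refl =>
    exact ⟨fun a c => by rw [coord_cone]; split <;> norm_num, fun a => (C.coord_v q a).ge⟩
  | @head p' _ hp _ ih =>
    obtain ⟨hp, rfl⟩ := hp
    have hcone : ∀ a c, 0 ≤ C.coord q a (C.cone p' c) := by
      intro a c
      rw [cone_of_pos C hp]
      rcases eq_or_ne c (C.label p') with rfl | hc
      · rw [Function.update_self]; exact zero_le_one.trans (ih.2 a)
      · rw [Function.update_of_ne hc]; exact ih.1 a c
    refine ⟨hcone, fun a => ?_⟩
    calc 1 ≤ C.coord q a (C.cone p' (C.label p')) := by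
          rw [cone_of_pos C hp, Function.update_self]; exact ih.2 a
      _ ≤ C.coord q a (C.v p') := by
          rw [v, map_sum]
          exact Finset.single_le_sum (fun c _ => hcone a c) (Finset.mem_univ _)

theorem reflTransGen_of_eq_zero (p q : Fin r) (hq : (q : ℕ) = 0) :
    ReflTransGen C.IsChild p q := by
  induction p using C.induction_parent with
  | root p hp => rw [Fin.ext (hp.trans hq.symm)]
  | child p hp ih => exact ReflTransGen.head (C.parent_isChild hp) ih

theorem le_of_reflTransGen {p q : Fin r} (h : ReflTransGen C.IsChild p q) : (q : ℕ) ≤ p := by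
  induction h using ReflTransGen.head_induction_on with
  | refl => rfl
  | head hp _ ih => exact ih.trans (hp.2 ▸ C.parent_lt _ hp.1).le

theorem reflTransGen_of_one_le_coord {p q : Fin r} (h : ∀ a, 1 ≤ C.coord q a (C.v p)) :
    ReflTransGen C.IsChild p q := by
  induction q using C.induction_parent with
  | root q hq => exact C.reflTransGen_of_eq_zero p q hq
  | child q hq ih =>
    have hQ : ∀ a, 1 ≤ C.coord (C.parent q) a (C.v p) := by
      intro a
      have hl := h (C.label q)
      rw [coord_label C hq] at hl
      rcases eq_or_ne a (C.label q) with rfl | ha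
      · exact hl
      · have := h a
        rw [coord_of_ne_label C hq ha] at this
        simp only [LinearMap.sub_apply] at this
        omega
    rcases (ih hQ).cases_tail with rfl | ⟨q', hpq', hq'⟩
    · obtain ⟨a, ha⟩ := exists_ne (C.label q)
      have := h a
      rw [coord_of_ne_label C hq ha, LinearMap.sub_apply, coord_v, coord_v] at this
      omega
    rcases eq_or_ne (C.label q') (C.label q) with hl | hl
    · rwa [C.eq_of_isChild_of_label_eq hq' (C.parent_isChild hq) hl] at hpq'
    · -- `v p` would lie strictly on both the `label q'` side and the `label q` side of
      -- `cone (parent q)`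
      have h1 := (C.coord_nonneg_of_reflTransGen hpq').2 (C.label q)
      have h2 := h (C.label q')
      rw [coord_of_ne_label C hq'.1 (Ne.symm hl), hq'.2] at h1
      rw [coord_of_ne_label C hq hl] at h2
      simp only [LinearMap.sub_apply] at h1 h2
      omega

theorem v_injective : Function.Injective C.v := by
  intro p q h
  have hpq := C.reflTransGen_of_one_le_coord (p := p) (q := q) (fun a => by rw [h, coord_v])
  have hqp := C.reflTransGen_of_one_le_coord (p := q) (q := p) (fun a => by rw [← h, coord_v])
  exact Fin.ext ((C.le_of_reflTransGen hqp).antisymm (C.le_of_reflTransGen hpq))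

theorem one_le_v_apply (p : Fin r) (a : Fin 3) : 1 ≤ C.v p a := by
  have hroot : ((⟨0, p.pos⟩ : Fin r) : ℕ) = 0 := rfl
  simpa [coord_of_eq_zero C hroot] using
    (C.coord_nonneg_of_reflTransGen (C.reflTransGen_of_eq_zero p _ hroot)).2 a

/-- For `c ∈ labelsUnder k`, the parent of the last node on the path to `k` entered along an edge
labelled `c` (meaningless for `c ∉ labelsUnder k`). -/
def anchor (k : Fin r) (c : Fin 3) : Fin r :=
  if _ : 0 < (k : ℕ) then
    if C.label k = c then C.parent k else anchor (C.parent k) c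
  else k
termination_by (k : ℕ)
decreasing_by exact C.parent_lt k ‹_›

theorem anchor_of_pos {k : Fin r} (hk : 0 < (k : ℕ)) (c : Fin 3) :
    C.anchor k c = if C.label k = c then C.parent k else C.anchor (C.parent k) c := by
  rw [anchor]; simp [hk]

theorem cone_eq_v_anchor {k : Fin r} {c : Fin 3} (hc : c ∈ C.labelsUnder k) :
    C.cone k c = C.v (C.anchor k c) := by
  induction k using C.induction_parent with
  | root k hk => simp [labelsUnder_of_eq_zero C hk] at hc
  | child k hk ih =>
    rw [cone_of_pos C hk, anchor_of_pos C hk]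
    rcases eq_or_ne (C.label k) c with rfl | hl
    · simp
    · rw [labelsUnder_of_pos C hk, Finset.mem_insert] at hc
      rw [Function.update_of_ne (Ne.symm hl), if_neg hl, ih (hc.resolve_left (Ne.symm hl))]

theorem cone_eq_single {k : Fin r} {c : Fin 3} (hc : c ∉ C.labelsUnder k) :
    C.cone k c = Pi.single c 1 := by
  induction k using C.induction_parent with
  | root k hk => rw [cone_of_eq_zero C hk]
  | child k hk ih =>
    rw [labelsUnder_of_pos C hk, Finset.mem_insert, not_or] at hc
    rw [cone_of_pos C hk, Function.update_of_ne hc.1, ih hc.2]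

theorem anchor_lt {k : Fin r} {c : Fin 3} (hc : c ∈ C.labelsUnder k) :
    (C.anchor k c : ℕ) < k := by
  induction k using C.induction_parent with
  | root k hk => simp [labelsUnder_of_eq_zero C hk] at hc
  | child k hk ih =>
    rw [anchor_of_pos C hk]
    rw [labelsUnder_of_pos C hk, Finset.mem_insert] at hc
    split_ifs with hl
    · exact C.parent_lt k hk
    · exact (ih (hc.resolve_left (Ne.symm hl))).trans (C.parent_lt k hk)

theorem prox_iff {k l : Fin r} : C.Prox k l ↔ ∃ c ∈ C.labelsUnder k, C.anchor k c = l := by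
  constructor
  · rintro ⟨-, c, hc⟩
    by_cases hmem : c ∈ C.labelsUnder k
    · exact ⟨c, hmem, C.v_injective ((C.cone_eq_v_anchor hmem).symm.trans hc)⟩
    · obtain ⟨a, ha⟩ := exists_ne c
      have := C.one_le_v_apply l a
      rw [← hc, cone_eq_single C hmem, Pi.single_apply, if_neg ha] at this
      omega
  · rintro ⟨c, hc, rfl⟩
    exact ⟨fun h => (C.anchor_lt hc).ne (congrArg Fin.val h).symm, c, C.cone_eq_v_anchor hc⟩

theorem anchor_injOn (k : Fin r) : Set.InjOn (C.anchor k) (C.labelsUnder k) := by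
  intro c hc c' hc' h
  apply C.cone_injective k
  rw [C.cone_eq_v_anchor hc, C.cone_eq_v_anchor hc', h]

theorem anchor_of_inChain {i k : Fin r} {a b : Fin 3} (hab : a ≠ b)
    (h : C.inChain i a b k = true) : a ∈ C.labelsUnder k ∧ C.anchor k a = i := by
  induction k using C.induction_parent with
  | root k hk => exact absurd (C.inChain_iff.mp h).1 (by omega)
  | child k hk ih =>
    rw [labelsUnder_of_pos C hk, Finset.mem_insert, anchor_of_pos C hk]
    obtain ⟨-, ⟨rfl, rfl⟩ | ⟨hl, hc⟩⟩ := C.inChain_iff.mp h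
    · simp
    · have hla : C.label k ≠ a := hl ▸ Ne.symm hab
      rw [if_neg hla]
      exact ⟨Or.inr (ih hc).1, (ih hc).2⟩

theorem prox_of_linProx {k i : Fin r} (h : C.LinProx k i) : C.Prox k i := by
  obtain ⟨a, b, hab, hc⟩ := h
  exact C.prox_iff.mpr ⟨a, C.anchor_of_inChain hab hc⟩

theorem inChain_of_isChild {i k : Fin r} (hk : C.IsChild k i) (b : Fin 3) :
    C.inChain i (C.label k) b k = true :=
  C.inChain_iff.mpr ⟨hk.1, Or.inl ⟨hk.2, rfl⟩⟩

theorem inChain_of_isChild_of_inChain {i k l : Fin r} {a : Fin 3} (hk : C.IsChild k l)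
    (hl : C.inChain i a (C.label k) l = true) : C.inChain i a (C.label k) k = true :=
  C.inChain_iff.mpr ⟨hk.1, Or.inr ⟨rfl, hk.2 ▸ hl⟩⟩

theorem prox_anchor_iff_of_isChild {i j : Fin r} (hj : C.IsChild j i) {c : Fin 3}
    (hc : c ∈ C.labelsUnder i) : C.Prox j (C.anchor i c) ↔ c ≠ C.label j := by
  rw [prox_iff, labelsUnder_of_pos C hj.1]
  simp only [Finset.mem_insert, anchor_of_pos C hj.1, hj.2]
  constructor
  · rintro ⟨c', hc', he⟩ rfl
    split_ifs at he with hl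
    · exact (C.anchor_lt hc).ne (congrArg Fin.val he.symm)
    · exact hl (C.anchor_injOn i (hc'.resolve_left (Ne.symm hl)) hc he).symm
  · intro hl
    exact ⟨c, Or.inr hc, if_neg (Ne.symm hl)⟩

theorem eq_of_anchor_eq {i j : Fin r} (hci : ∀ k, C.IsChild k i → k = j)
    (hcj : ∀ k, C.IsChild k j → C.label k = C.label j) {k : Fin r} {c : Fin 3}
    (hc : c ∈ C.labelsUnder k) (h : C.anchor k c = i) : k = j ∧ c = C.label j := by
  induction k using C.induction_parent with
  | root k hk => simp [labelsUnder_of_eq_zero C hk] at hc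
  | child k hk ih =>
    rw [anchor_of_pos C hk] at h
    rw [labelsUnder_of_pos C hk, Finset.mem_insert] at hc
    split_ifs at h with hl
    · obtain rfl := hci k ⟨hk, h⟩
      exact ⟨rfl, hl.symm⟩
    · obtain ⟨hpj, rfl⟩ := ih (hc.resolve_left (Ne.symm hl)) h
      exact absurd (hcj k ⟨hk, hpj⟩) hl

theorem prox_iff_eq {i j : Fin r} (hj : C.IsChild j i) (hci : ∀ k, C.IsChild k i → k = j)
    (hcj : ∀ k, C.IsChild k j → C.label k = C.label j) {k : Fin r} : C.Prox k i ↔ k = j := by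
  rw [prox_iff]
  constructor
  · rintro ⟨c, hc, h⟩
    exact (C.eq_of_anchor_eq hci hcj hc h).1
  · rintro rfl
    obtain ⟨b, hb⟩ := exists_ne (C.label k)
    exact ⟨_, C.anchor_of_inChain (Ne.symm hb) (C.inChain_of_isChild hj b)⟩

theorem linProx_iff_eq {i j : Fin r} (hj : C.IsChild j i) (hci : ∀ k, C.IsChild k i → k = j)
    (hcj : ∀ k, C.IsChild k j → C.label k = C.label j) {k : Fin r} :
    C.LinProx k i ↔ k = j := by
  refine ⟨fun h => (C.prox_iff_eq hj hci hcj).mp (C.prox_of_linProx h), ?_⟩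
  rintro rfl
  obtain ⟨b, hb⟩ := exists_ne (C.label k)
  exact ⟨C.label k, b, Ne.symm hb, C.inChain_of_isChild hj b⟩

theorem exists_prox_prox_iff {i j : Fin r} (hj : C.IsChild j i) :
    (∃ l, C.Prox i l ∧ C.Prox j l) ↔ ∃ c ∈ C.labelsUnder i, c ≠ C.label j := by
  simp only [C.prox_iff (k := i)]
  constructor
  · rintro ⟨_, ⟨c, hc, rfl⟩, hjl⟩
    exact ⟨c, hc, (C.prox_anchor_iff_of_isChild hj hc).mp hjl⟩
  · rintro ⟨c, hc, hl⟩
    exact ⟨_, ⟨c, hc, rfl⟩, (C.prox_anchor_iff_of_isChild hj hc).mpr hl⟩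

end ToricConstellation

namespace ToricCluster

variable {r : ℕ} (A : ToricCluster r)

theorem Bset_eq_image (i : Fin r) :
    A.Bset i = (labelsUnder A.toToricConstellation i).image (A.anchor i) := by
  ext l
  simp [Bset, A.prox_iff]

theorem card_Bset (i : Fin r) : (A.Bset i).card = (labelsUnder A.toToricConstellation i).card := by
  rw [Bset_eq_image, Finset.card_image_of_injOn (A.anchor_injOn i)]

theorem sum_Bset (i : Fin r) (f : Fin r → ℤ) :
    ∑ l ∈ A.Bset i, f l = ∑ c ∈ labelsUnder A.toToricConstellation i, f (A.anchor i c) := by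
  rw [Bset_eq_image, Finset.sum_image (A.anchor_injOn i)]

theorem Aset_eq {i j : Fin r} (hj : IsChild A.toToricConstellation j i)
    (hci : ∀ k, IsChild A.toToricConstellation k i → k = j) :
    A.Aset i =
      if ∀ c ∈ labelsUnder A.toToricConstellation i, c = A.label j then {j} else ∅ := by
  ext k
  simp only [Aset, Finset.mem_filter, Finset.mem_univ, true_and]
  split_ifs with h
  · rw [Finset.mem_singleton]
    refine ⟨fun hk => hci k hk.1, ?_⟩
    rintro rfl
    refine ⟨hj, ?_⟩
    rw [A.exists_prox_prox_iff hj]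
    simpa using h
  · refine iff_of_false ?_ (Finset.notMem_empty k)
    rintro ⟨hk, hno⟩
    obtain rfl := hci k hk
    exact hno ((A.exists_prox_prox_iff hj).mpr (by simpa using h))

theorem sum_le_M {i : Fin r} {a b : Fin 3} {s : Finset (Fin r)}
    (hs : ∀ k ∈ s, inChain A.toToricConstellation i a b k = true) :
    ∑ k ∈ s, A.m k ≤ A.M i a b :=
  Finset.sum_le_sum_of_subset_of_nonneg (fun k hk => by simpa using hs k hk)
    (fun k _ _ => (A.m_pos k).le)

theorem eq_of_isChild_of_m_eq {A : ToricCluster r} (hA : A.Idealistic) {i j k : Fin r}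
    (hj : IsChild A.toToricConstellation j i) (hm : A.m j = A.m i)
    (hk : IsChild A.toToricConstellation k i) : k = j := by
  by_contra hkj
  have hl : A.label k ≠ A.label j := fun hl => hkj (A.eq_of_isChild_of_label_eq hk hj hl)
  have hjM := A.sum_le_M (s := {j}) (b := A.label k) (by simpa using A.inChain_of_isChild hj _)
  have hkM := A.sum_le_M (s := {k}) (b := A.label j) (by simpa using A.inChain_of_isChild hk _)
  have := hA i _ _ hl.symm
  have := A.m_pos k
  simp only [Finset.sum_singleton] at hjM hkM
  omega

theorem label_eq_of_isChild_of_m_eq {A : ToricCluster r} (hA : A.Idealistic) {i j k : Fin r}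
    (hj : IsChild A.toToricConstellation j i) (hm : A.m j = A.m i)
    (hk : IsChild A.toToricConstellation k j) :
    A.label k = A.label j := by
  by_contra hl
  have hne : j ≠ k := fun h => (A.parent_lt k hk.1).ne (by rw [hk.2, h])
  have hjk := A.sum_le_M (s := {j, k}) (a := A.label j) (b := A.label k) (i := i) (by
    simp only [Finset.mem_insert, Finset.mem_singleton, forall_eq_or_imp, forall_eq]
    exact ⟨A.inChain_of_isChild hj _,
      A.inChain_of_isChild_of_inChain hk (A.inChain_of_isChild hj _)⟩)
  have hM := A.sum_le_M (s := ∅) (i := i) (a := A.label k) (b := A.label j) (by simp)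
  have := hA i _ _ (Ne.symm hl)
  have := A.m_pos k
  rw [Finset.sum_pair hne] at hjk
  simp only [Finset.sum_empty] at hM
  omega

theorem chi_eq_of_unique_child {i j : Fin r} (hj : IsChild A.toToricConstellation j i)
    (hci : ∀ k, IsChild A.toToricConstellation k i → k = j)
    (hcj : ∀ k, IsChild A.toToricConstellation k j → A.label k = A.label j)
    (hm : A.m j = A.m i) :
    A.chi i = 3 - A.m i + (if A.label j ∈ labelsUnder A.toToricConstellation i then A.m i else 0)
      - (A.Aset i).card - 2 * (labelsUnder A.toToricConstellation i).card
      + ((labelsUnder A.toToricConstellation i).card.choose 2 : ℕ) := by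
  have hprox : A.proxSet i = {j} := by
    ext k
    simp [proxSet, A.prox_iff_eq hj hci hcj]
  have hlin (k : Fin r) : LinProx A.toToricConstellation k i ↔ k = j :=
    A.linProx_iff_eq hj hci hcj
  have hjj : ¬ LinProx A.toToricConstellation j j := fun h => (A.prox_of_linProx h).1 rfl
  have hlinSum (l : Fin r) :
      ∑ k ∈ (A.proxSet l).filter (LinProx A.toToricConstellation · i), A.m k =
        if Prox A.toToricConstellation j l then A.m i else 0 := by
    rw [Finset.filter_congr (fun k _ => hlin k), Finset.filter_eq']
    simp only [proxSet, Finset.mem_filter, Finset.mem_univ, true_and]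
    split_ifs <;> simp [hm]
  have hBsum : ∑ l ∈ A.Bset i, (A.m i - ∑ k ∈ (A.proxSet l).filter
      (LinProx A.toToricConstellation · i), A.m k)
      = if A.label j ∈ labelsUnder A.toToricConstellation i then A.m i else 0 := by
    simp only [hlinSum]
    rw [sum_Bset, ← Finset.sum_ite_eq' _ _ fun _ => A.m i]
    refine Finset.sum_congr rfl fun c hc => ?_
    simp only [A.prox_anchor_iff_of_isChild hj hc, ite_not]
    split_ifs <;> ring
  rw [chi, hprox, Finset.sum_singleton, Finset.sum_singleton, Finset.filter_singleton, if_neg hjj,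
    Finset.sum_empty, hBsum, card_Bset, hm]
  ring

theorem chi_eq_of_m_eq {A : ToricCluster r} (hA : A.Idealistic) {i j : Fin r}
    (hj : IsChild A.toToricConstellation j i) (hm : A.m j = A.m i) :
    A.chi i = 3 - A.m i + (if A.label j ∈ labelsUnder A.toToricConstellation i then A.m i else 0)
      - (if ∀ c ∈ labelsUnder A.toToricConstellation i, c = A.label j then 1 else 0)
      - 2 * (labelsUnder A.toToricConstellation i).card
      + ((labelsUnder A.toToricConstellation i).card.choose 2 : ℕ) := by
  have hci (k : Fin r) := eq_of_isChild_of_m_eq (k := k) hA hj hm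
  rw [A.chi_eq_of_unique_child hj hci (fun k => label_eq_of_isChild_of_m_eq hA hj hm) hm,
    A.Aset_eq hj hci]
  split_ifs <;> simp

end ToricCluster

theorem stmt6 {r : ℕ} (A : ToricCluster r) (hA : A.Idealistic)
    (i j : Fin r) (a : Fin 3)
    (hchild : IsChild A.toToricConstellation j i)
    (hlab : A.toToricConstellation.label j = a)
    (hm : A.m j = A.m i) :
    (a ∈ labelsUnder A.toToricConstellation i → A.chi i = 0)
    ∧ (labelsUnder A.toToricConstellation i = ∅ → A.chi i = 2 - A.m i)
    ∧ (a ∉ labelsUnder A.toToricConstellation i →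
        (labelsUnder A.toToricConstellation i).card = 1 → A.chi i = 1 - A.m i)
    ∧ (a ∉ labelsUnder A.toToricConstellation i →
        (labelsUnder A.toToricConstellation i).card = 2 → A.chi i = -A.m i) := by
  subst hlab
  have hχ := chi_eq_of_m_eq hA hchild hm
  set S := labelsUnder A.toToricConstellation i
  have hsub_of_notMem (ha : A.label j ∉ S) (hS : 0 < S.card) : ¬ ∀ c ∈ S, c = A.label j :=
    fun h => ha <| by obtain ⟨c, hc⟩ := Finset.card_pos.mp hS; exact h c hc ▸ hc
  refine ⟨fun ha => ?_, fun h0 => ?_, fun ha h1 => ?_, fun ha h2 => ?_⟩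
  · by_cases hsub : ∀ c ∈ S, c = A.label j
    · have h1 : S.card = 1 :=
        Finset.card_eq_one.mpr ⟨_, Finset.eq_singleton_iff_unique_mem.mpr ⟨ha, hsub⟩⟩
      rw [hχ, if_pos ha, if_pos hsub, h1]
      norm_num
    · obtain ⟨c, hc, hca⟩ := not_forall₂.mp hsub
      have hS2 : 1 < S.card := Finset.one_lt_card.mpr ⟨c, hc, _, ha, hca⟩
      have hS3 : S.card ≤ 3 := by simpa using S.card_le_univ
      rw [hχ, if_pos ha, if_neg hsub]
      interval_cases S.card <;> norm_num
  · rw [hχ, h0]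
    norm_num
    ring
  · rw [hχ, if_neg ha, if_neg (hsub_of_notMem ha (by omega)), h1]
    norm_num
    ring
  · rw [hχ, if_neg ha, if_neg (hsub_of_notMem ha (by omega)), h2]
    norm_num
    ring
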